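/- Soundness of the counterexample algorithm: if T ⊭ C ⊑ D for a normalized EL_⊥ TBox T (with D ⊑ B* ∈ T, B* fresh), then in the interpretation I generated by the algorithm from the initial ABox {C(a*)}, the root element satisfies a*^I ∉ (B*)^I. -/

import Mathlib

/-! Basic syntax and semantics of the description logic EL_⊥. -/

/-- EL_⊥ concepts over concept names `C` and role names `R`. -/
inductive ELConcept (C R : Type) : Type
  | top  : ELConcept C R
  | bot  : ELConcept C R
  | atom : C → ELConcept C R
  | conj : ELConcept C R → ELConcept C R → ELConcept C R
  | ex   : R → ELConcept C R → ELConcept C R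

/-- A general concept inclusion (GCI) `C ⊑ D`. -/
abbrev GCI (C R : Type) := ELConcept C R × ELConcept C R

/-- A TBox is a set of GCIs. -/
abbrev TBox (C R : Type) := Set (GCI C R)

/-- ABox assertions: concept assertions `C(a)` and role assertions `r(a,b)`. -/
inductive Assertion (C R Ind : Type) : Type
  | concept : ELConcept C R → Ind → Assertion C R Ind
  | role    : R → Ind → Ind → Assertion C R Ind

/-- An ABox is a set of assertions. -/
abbrev ABox (C R Ind : Type) := Set (Assertion C R Ind)

/-- An interpretation with domain `δ`, interpreting concept names, role names
and individual names. -/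
structure Interp (C R Ind δ : Type) where
  atomI : C → Set δ
  roleI : R → Set (δ × δ)
  indI  : Ind → δ

/-- Semantics of concepts. -/
def Interp.sem {C R Ind δ : Type} (I : Interp C R Ind δ) : ELConcept C R → Set δ
  | .top => Set.univ
  | .bot => ∅
  | .atom A => I.atomI A
  | .conj c d => I.sem c ∩ I.sem d
  | .ex r c => {x | ∃ y, (x, y) ∈ I.roleI r ∧ y ∈ I.sem c}

/-- `I` satisfies a GCI `C ⊑ D` iff `C^I ⊆ D^I`. -/
def Interp.satGCI {C R Ind δ : Type} (I : Interp C R Ind δ) (g : GCI C R) : Prop :=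
  I.sem g.1 ⊆ I.sem g.2

/-- `I` is a model of a TBox. -/
def Interp.modelT {C R Ind δ : Type} (I : Interp C R Ind δ) (T : TBox C R) : Prop :=
  ∀ g ∈ T, I.satGCI g

/-- `I` satisfies an assertion. -/
def Interp.satA {C R Ind δ : Type} (I : Interp C R Ind δ) : Assertion C R Ind → Prop
  | .concept c a => I.indI a ∈ I.sem c
  | .role r a b => (I.indI a, I.indI b) ∈ I.roleI r

/-- `I` is a model of an ABox. -/
def Interp.modelA {C R Ind δ : Type} (I : Interp C R Ind δ) (A : ABox C R Ind) : Prop :=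
  ∀ ax ∈ A, I.satA ax

/-- `I` is a model of the ontology `O = A ∪ T`. -/
def Interp.modelO {C R Ind δ : Type} (I : Interp C R Ind δ) (A : ABox C R Ind)
    (T : TBox C R) : Prop :=
  I.modelA A ∧ I.modelT T

/-- TBox entailment of a GCI: every model of `T` satisfies the GCI. -/
def entailsT {C R : Type} (T : TBox C R) (g : GCI C R) : Prop :=
  ∀ (Ind δ : Type) (I : Interp C R Ind δ), I.modelT T → I.satGCI g

/-- The ontology `A ∪ T` is consistent iff it has a model. -/
def consistentO {C R Ind : Type} (A : ABox C R Ind) (T : TBox C R) : Prop :=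
  ∃ (δ : Type) (I : Interp C R Ind δ), I.modelO A T

/-- Entailment of an assertion from an ontology `A ∪ T`. -/
def entailsO {C R Ind : Type} (A : ABox C R Ind) (T : TBox C R)
    (ax : Assertion C R Ind) : Prop :=
  ∀ (δ : Type) (I : Interp C R Ind δ), I.modelO A T → I.satA ax

/-- Occurrence of a concept name in a concept. -/
def occursName {C R : Type} (B : C) : ELConcept C R → Prop
  | .atom A => A = B
  | .conj c d => occursName B c ∨ occursName B d
  | .ex _ c => occursName B c
  | _ => False

/-- Occurrence of a concept name in a TBox. -/
def occursNameT {C R : Type} (B : C) (T : TBox C R) : Prop :=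
  ∃ g ∈ T, occursName B g.1 ∨ occursName B g.2

/-- A concept is ⊥-free (i.e. an EL concept). -/
def botFree {C R : Type} : ELConcept C R → Prop
  | .bot => False
  | .conj c d => botFree c ∧ botFree d
  | .ex _ c => botFree c
  | _ => True

/-- The top-level conjuncts `At(D)` of a concept `D`: the conjuncts of `D`
if `D` is a conjunction, and `{D}` otherwise. -/
def At {C R : Type} : ELConcept C R → Set (ELConcept C R)
  | .conj c d => At c ∪ At d
  | c => {c}

/-- A concept that is a concept name or `⊤`. -/
def atomicOrTop {C R : Type} (c : ELConcept C R) : Prop :=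
  c = ELConcept.top ∨ ∃ A, c = ELConcept.atom A

/-- A basic concept: a concept name, `⊤`, or `⊥`. -/
def isBasic {C R : Type} (c : ELConcept C R) : Prop :=
  c = ELConcept.top ∨ c = ELConcept.bot ∨ ∃ A, c = ELConcept.atom A

/-- Axioms of a normalized EL_⊥ TBox: `A ⊑ B`, `A₁ ⊓ A₂ ⊑ B`, `∃r.A ⊑ B`,
or `A ⊑ ∃r.B`, with `A, A₁, A₂, B` concept names, `⊤`, or `⊥`. -/
def normalizedAxiom {C R : Type} (g : GCI C R) : Prop :=
  (isBasic g.1 ∧ isBasic g.2) ∨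
  (∃ A1 A2, isBasic A1 ∧ isBasic A2 ∧ g.1 = ELConcept.conj A1 A2 ∧ isBasic g.2) ∨
  (∃ r A, isBasic A ∧ g.1 = ELConcept.ex r A ∧ isBasic g.2) ∨
  (∃ r B, isBasic B ∧ g.2 = ELConcept.ex r B ∧ isBasic g.1)

/-- A normalized TBox. -/
def normalized {C R : Type} (T : TBox C R) : Prop :=
  ∀ g ∈ T, normalizedAxiom g

/-- The left-hand side `L` of a TBox axiom is witnessed at `a` in `A`. -/
def witnessed {C R Ind : Type} (A : ABox C R Ind) (L : ELConcept C R) (a : Ind) : Prop :=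
  Assertion.concept L a ∈ A ∨
  ∃ c d, L = ELConcept.conj c d ∧ Assertion.concept c a ∈ A ∧ Assertion.concept d a ∈ A

/-- An assertion mentions the individual `d`. -/
def Assertion.mentions {C R Ind : Type} (d : Ind) : Assertion C R Ind → Prop
  | .concept _ a => a = d
  | .role _ a b => a = d ∨ b = d

/-- The individual `d` occurs in the ABox `A`. -/
def mentionsA {C R Ind : Type} (d : Ind) (A : ABox C R Ind) : Prop :=
  ∃ ax ∈ A, ax.mentions d

/-- The expansion rules other than the ∃₂-rule: the ⊓-rule, the ∃₁-rule and
the ⊑-rule. -/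
inductive StepCore {C R Ind : Type} (T : TBox C R) : ABox C R Ind → ABox C R Ind → Prop
  | conjRule {A : ABox C R Ind} {D c : ELConcept C R} {a : Ind} :
      Assertion.concept D a ∈ A → c ∈ At D → Assertion.concept c a ∉ A →
      StepCore T A (insert (Assertion.concept c a) A)
  | ex1 {A : ABox C R Ind} {r : R} {a b : Ind} {B : ELConcept C R} :
      Assertion.role r a b ∈ A → Assertion.concept B b ∈ A → atomicOrTop B →
      Assertion.concept (ELConcept.ex r B) a ∉ A →
      StepCore T A (insert (Assertion.concept (ELConcept.ex r B) a) A)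
  | sub {A : ABox C R Ind} {g : GCI C R} {a : Ind} :
      g ∈ T → witnessed A g.1 a → Assertion.concept g.2 a ∉ A →
      StepCore T A (insert (Assertion.concept g.2 a) A)

/-- The ∃₂-rule, parameterized by a guard `good` describing when an existing
individual may be reused as a successor. A fresh individual is introduced
only if no existing individual can be reused. -/
inductive StepEx {C R Ind : Type} (good : ABox C R Ind → Prop) :
    ABox C R Ind → ABox C R Ind → Prop
  | reuse {A : ABox C R Ind} {r : R} {a c : Ind} {E : ELConcept C R} :
      Assertion.concept (ELConcept.ex r E) a ∈ A →
      (¬ ∃ b, Assertion.role r a b ∈ A ∧ Assertion.concept E b ∈ A) →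
      good (insert (Assertion.role r a c) (insert (Assertion.concept E c) A)) →
      StepEx good A (insert (Assertion.role r a c) (insert (Assertion.concept E c) A))
  | fresh {A : ABox C R Ind} {r : R} {a d : Ind} {E : ELConcept C R} :
      Assertion.concept (ELConcept.ex r E) a ∈ A →
      (¬ ∃ b, Assertion.role r a b ∈ A ∧ Assertion.concept E b ∈ A) →
      (¬ ∃ c, good (insert (Assertion.role r a c) (insert (Assertion.concept E c) A))) →
      ¬ mentionsA d A →
      StepEx good A (insert (Assertion.role r a d) (insert (Assertion.concept E d)
        (insert (Assertion.concept ELConcept.top d) A)))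

/-- One application of any expansion rule. -/
def Step {C R Ind : Type} (T : TBox C R) (good : ABox C R Ind → Prop)
    (A A' : ABox C R Ind) : Prop :=
  StepCore T A A' ∨ StepEx good A A'

/-- One application of an expansion rule under the strategy that the ∃₂-rule
is applied only when no other rule is applicable. -/
def StepPr {C R Ind : Type} (T : TBox C R) (good : ABox C R Ind → Prop)
    (A A' : ABox C R Ind) : Prop :=
  StepCore T A A' ∨ ((¬ ∃ B, StepCore T A B) ∧ StepEx good A A')

/-- An ABox is complete if no expansion rule is applicable. -/
def completeA {C R Ind : Type} (T : TBox C R) (good : ABox C R Ind → Prop)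
    (A' : ABox C R Ind) : Prop :=
  ¬ ∃ A'', Step T good A' A''

/-- An ABox is clash-free if it contains no assertion `⊥(a)`. -/
def clashFree {C R Ind : Type} (A' : ABox C R Ind) : Prop :=
  ∀ a, Assertion.concept ELConcept.bot a ∉ A'

/-- The interpretation induced from an ABox: `a^I = a`,
`A^I = {a | A(a) ∈ A'}`, `r^I = {(a,b) | r(a,b) ∈ A'}`. -/
def induced {C R Ind : Type} (A' : ABox C R Ind) : Interp C R Ind Ind where
  atomI := fun B => {a | Assertion.concept (ELConcept.atom B) a ∈ A'}
  roleI := fun r => {p | Assertion.role r p.1 p.2 ∈ A'}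
  indI := id

/-- The guard used by the counterexample algorithm for reusing individuals:
the extended ontology must be consistent and must not entail `B*(a*)`. -/
def ceGuard {C R Ind : Type} (T : TBox C R) (Bstar : C) (astar : Ind)
    (B : ABox C R Ind) : Prop :=
  consistentO B T ∧ ¬ entailsO B T (Assertion.concept (ELConcept.atom Bstar) astar)

/-!
The algorithm only ever adds assertions that keep `B*(a*)` non-entailed. Initially, a model
of `T` with an element of `C \ D` becomes a countermodel for `{C(a*)}` once `B*` is
reinterpreted as `D`, which changes no other axiom since `B*` is fresh. The `⊓`-, `∃₁`- and
`⊑`-rules add only consequences of the current ABox; the `∃₂`-rule either reuses an individual,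
which its guard allows only when `B*(a*)` stays non-entailed, or introduces a fresh one, which
a countermodel can map to the witness of the existential it is expanding. Since every
assertion of the final ABox `A'` is entailed by it, `B*(a*) ∉ A'`.
-/

namespace Interp

variable {C R Ind Ind' δ : Type}

@[simps]
def withInd (I : Interp C R Ind δ) (f : Ind' → δ) : Interp C R Ind' δ :=
  ⟨I.atomI, I.roleI, f⟩

@[simps]
def updateAtom [DecidableEq C] (I : Interp C R Ind δ) (B : C) (S : Set δ) : Interp C R Ind δ :=
  ⟨Function.update I.atomI B S, I.roleI, I.indI⟩

@[simp]
lemma sem_withInd (I : Interp C R Ind δ) (f : Ind' → δ) (c : ELConcept C R) :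
    (I.withInd f).sem c = I.sem c := by
  induction c with
  | top | bot | atom => rfl
  | conj c d ihc ihd => exact congrArg₂ (· ∩ ·) ihc ihd
  | ex r c ih => simp only [sem, ih]; rfl

lemma sem_updateAtom_of_not_occursName [DecidableEq C] (I : Interp C R Ind δ) {B : C}
    (S : Set δ) {c : ELConcept C R} (hc : ¬ occursName B c) :
    (I.updateAtom B S).sem c = I.sem c := by
  induction c with
  | top | bot => rfl
  | atom A => exact Function.update_of_ne hc S I.atomI
  | conj c d ihc ihd =>
    simp only [occursName, not_or] at hc
    exact congrArg₂ (· ∩ ·) (ihc hc.1) (ihd hc.2)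
  | ex r c ih => simp only [sem, ih hc]; rfl

lemma sem_subset_of_mem_At (I : Interp C R Ind δ) {D c : ELConcept C R} (hc : c ∈ At D) :
    I.sem D ⊆ I.sem c := by
  induction D with
  | conj d e ihd ihe =>
    rcases hc with hc | hc
    · exact fun x hx => ihd hc hx.1
    · exact fun x hx => ihe hc hx.2
  | _ => rw [Set.mem_singleton_iff.mp hc]

lemma modelT_updateAtom_sem [DecidableEq C] {I : Interp C R Ind δ} {T : TBox C R}
    {D : ELConcept C R} {B : C} (hI : I.modelT T) (hD : ¬ occursName B D)
    (hT : ∀ g ∈ T, g = (D, ELConcept.atom B) ∨ (¬ occursName B g.1 ∧ ¬ occursName B g.2)) :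
    (I.updateAtom B (I.sem D)).modelT T := by
  intro g hg
  rcases hT g hg with rfl | ⟨h₁, h₂⟩
  · intro x hx
    rw [sem_updateAtom_of_not_occursName I _ hD] at hx
    simpa [sem] using hx
  · simpa only [satGCI, sem_updateAtom_of_not_occursName I _ h₁,
      sem_updateAtom_of_not_occursName I _ h₂] using hI g hg

lemma modelA_insert {I : Interp C R Ind δ} {ax : Assertion C R Ind} {A : ABox C R Ind} :
    I.modelA (insert ax A) ↔ I.satA ax ∧ I.modelA A :=
  Set.forall_mem_insert

end Interp

section Entailment

variable {C R Ind : Type}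

lemma entailsO_of_mem {A : ABox C R Ind} {T : TBox C R} {ax : Assertion C R Ind}
    (h : ax ∈ A) : entailsO A T ax :=
  fun _ _ hI => hI.1 ax h

lemma not_entailsO_iff {A : ABox C R Ind} {T : TBox C R} {ax : Assertion C R Ind} :
    ¬ entailsO A T ax ↔ ∃ (δ : Type) (I : Interp C R Ind δ), I.modelO A T ∧ ¬ I.satA ax := by
  simp [entailsO]

lemma mentionsA_mono {A A' : ABox C R Ind} {d : Ind} (hA : A ⊆ A') (h : mentionsA d A) :
    mentionsA d A' :=
  let ⟨ax, hax, hd⟩ := h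
  ⟨ax, hA hax, hd⟩

lemma not_entailsO_root_of_not_entailsT {T : TBox C R} {Cc D : ELConcept C R}
    {B : C} (a : Ind) (hC : ¬ occursName B Cc) (hD : ¬ occursName B D)
    (hT : ∀ g ∈ T, g = (D, ELConcept.atom B) ∨ (¬ occursName B g.1 ∧ ¬ occursName B g.2))
    (hne : ¬ entailsT T (Cc, D)) :
    ¬ entailsO {Assertion.concept Cc a} T (Assertion.concept (ELConcept.atom B) a) := by
  classical
  simp only [entailsT, Interp.satGCI, Set.not_subset, not_forall] at hne
  obtain ⟨_, δ, I, hIT, x, hxC, hxD⟩ := hne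
  let J : Interp C R Ind δ := (I.updateAtom B (I.sem D)).withInd fun _ => x
  refine not_entailsO_iff.mpr ⟨δ, J, ⟨?_, ?_⟩, ?_⟩
  · simpa [Interp.modelA, Interp.satA, J, Interp.sem_updateAtom_of_not_occursName I _ hC]
  · intro g hg
    simpa [Interp.satGCI, J] using Interp.modelT_updateAtom_sem hIT hD hT g hg
  · simpa [Interp.satA, Interp.sem, J] using hxD

end Entailment

namespace StepCore

variable {C R Ind δ : Type} {T : TBox C R} {A A' : ABox C R Ind}

lemma modelO_of_modelO {I : Interp C R Ind δ} (hstep : StepCore T A A') (hI : I.modelO A T) :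
    I.modelO A' T := by
  refine ⟨?_, hI.2⟩
  cases hstep with
  | conjRule hD hc _ =>
    exact Interp.modelA_insert.mpr ⟨I.sem_subset_of_mem_At hc (hI.1 _ hD), hI.1⟩
  | ex1 hr hB _ _ => exact Interp.modelA_insert.mpr ⟨⟨_, hI.1 _ hr, hI.1 _ hB⟩, hI.1⟩
  | @sub g a hg hw _ =>
    have hlhs : I.indI a ∈ I.sem g.1 := by
      rcases hw with h | ⟨c, d, hcd, hc, hd⟩
      · exact hI.1 _ h
      · rw [hcd]; exact ⟨hI.1 _ hc, hI.1 _ hd⟩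
    exact Interp.modelA_insert.mpr ⟨hI.2 g hg hlhs, hI.1⟩

lemma subset (hstep : StepCore T A A') : A ⊆ A' := by
  cases hstep <;> exact Set.subset_insert _ _

end StepCore

namespace StepEx

variable {C R Ind : Type} {T : TBox C R}

/-- The fresh successor `d` is interpreted as a witness of the existential being expanded. -/
lemma exists_modelO_fresh {δ : Type} {A : ABox C R Ind} {r : R} {a d : Ind} {E : ELConcept C R}
    {I : Interp C R Ind δ} (hEx : Assertion.concept (ELConcept.ex r E) a ∈ A)
    (hd : ¬ mentionsA d A) (hI : I.modelO A T) :
    ∃ f : Ind → δ, (I.withInd f).modelO (insert (Assertion.role r a d)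
        (insert (Assertion.concept E d) (insert (Assertion.concept ELConcept.top d) A))) T ∧
      ∀ b ≠ d, f b = I.indI b := by
  classical
  obtain ⟨y, hay, hyE⟩ := hI.1 _ hEx
  have hf : ∀ b ≠ d, Function.update I.indI d y b = I.indI b :=
    fun b hb => Function.update_of_ne hb _ _
  have had : a ≠ d := fun h => hd ⟨_, hEx, h⟩
  have hold : (I.withInd (Function.update I.indI d y)).modelA A := by
    rintro (⟨c, b⟩ | ⟨s, b, b'⟩) hax
    · have hb : b ≠ d := fun h => hd ⟨_, hax, h⟩
      simpa [Interp.satA, hf b hb] using hI.1 _ hax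
    · have hb : b ≠ d := fun h => hd ⟨_, hax, Or.inl h⟩
      have hb' : b' ≠ d := fun h => hd ⟨_, hax, Or.inr h⟩
      simpa [Interp.satA, hf b hb, hf b' hb'] using hI.1 _ hax
  refine ⟨_, ⟨?_, fun g hg => by simpa [Interp.satGCI] using hI.2 g hg⟩, hf⟩
  simp only [Interp.modelA_insert]
  refine ⟨?_, ?_, Set.mem_univ _, hold⟩
  · simpa [Interp.satA, hf a had] using hay
  · simpa [Interp.satA] using hyE

variable {good : ABox C R Ind → Prop} {A A' : ABox C R Ind}

lemma not_entailsO {c : ELConcept C R} {a : Ind}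
    (hgood : ∀ B, good B → ¬ entailsO B T (Assertion.concept c a))
    (hstep : StepEx good A A') (ha : mentionsA a A)
    (h : ¬ entailsO A T (Assertion.concept c a)) : ¬ entailsO A' T (Assertion.concept c a) := by
  cases hstep with
  | reuse _ _ hg => exact hgood _ hg
  | @fresh _ _ d _ hEx _ _ hd =>
    obtain ⟨δ, I, hI, hIa⟩ := not_entailsO_iff.mp h
    obtain ⟨f, hJ, hf⟩ := exists_modelO_fresh hEx hd hI
    have had : a ≠ d := fun h => hd (h ▸ ha)
    refine not_entailsO_iff.mpr ⟨δ, _, hJ, ?_⟩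
    simpa [Interp.satA, hf a had] using hIa

lemma subset (hstep : StepEx good A A') : A ⊆ A' := by
  cases hstep with
  | reuse => exact (Set.subset_insert _ _).trans (Set.subset_insert _ _)
  | fresh =>
    exact ((Set.subset_insert _ _).trans (Set.subset_insert _ _)).trans (Set.subset_insert _ _)

end StepEx

namespace Step

variable {C R Ind : Type} {T : TBox C R} {good : ABox C R Ind → Prop} {A A' : ABox C R Ind}

lemma subset (hstep : Step T good A A') : A ⊆ A' :=
  hstep.elim StepCore.subset StepEx.subset

lemma not_entailsO {c : ELConcept C R} {a : Ind}
    (hgood : ∀ B, good B → ¬ entailsO B T (Assertion.concept c a))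
    (hstep : Step T good A A') (ha : mentionsA a A)
    (h : ¬ entailsO A T (Assertion.concept c a)) : ¬ entailsO A' T (Assertion.concept c a) := by
  rcases hstep with hcore | hex
  · intro hent
    exact h fun δ I hI => hent δ I (hcore.modelO_of_modelO hI)
  · exact hex.not_entailsO hgood ha h

lemma subset_of_reflTransGen (hreach : Relation.ReflTransGen (Step T good) A A') : A ⊆ A' := by
  induction hreach with
  | refl => exact subset_rfl
  | tail _ hstep ih => exact ih.trans hstep.subset

lemma not_entailsO_of_reflTransGen {c : ELConcept C R} {a : Ind}
    (hgood : ∀ B, good B → ¬ entailsO B T (Assertion.concept c a))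
    (hreach : Relation.ReflTransGen (Step T good) A A') (ha : mentionsA a A)
    (h : ¬ entailsO A T (Assertion.concept c a)) : ¬ entailsO A' T (Assertion.concept c a) := by
  induction hreach with
  | refl => exact h
  | tail hreach hstep ih =>
    exact hstep.not_entailsO hgood (mentionsA_mono (subset_of_reflTransGen hreach) ha) ih

end Step

theorem stmt13_general {C R Ind : Type} (T : TBox C R)
    (Cc D : ELConcept C R) (Bstar : C) (astar : Ind) (A' : ABox C R Ind)
    (hfreshC : ¬ occursName Bstar Cc) (hfreshD : ¬ occursName Bstar D)
    (hfreshT : ∀ g ∈ T, g = (D, ELConcept.atom Bstar) ∨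
      (¬ occursName Bstar g.1 ∧ ¬ occursName Bstar g.2))
    (hreach : Relation.ReflTransGen (Step T (ceGuard T Bstar astar))
      {Assertion.concept Cc astar} A')
    (hne : ¬ entailsT T (Cc, D)) :
    (induced A').indI astar ∉ (induced A').sem (ELConcept.atom Bstar) := by
  have hroot := not_entailsO_root_of_not_entailsT astar hfreshC hfreshD hfreshT hne
  have hA' := Step.not_entailsO_of_reflTransGen (fun _ hguard => hguard.2) hreach
    ⟨_, rfl, rfl⟩ hroot
  exact fun hB => hA' (entailsO_of_mem hB)

/-- Soundness of the counterexample algorithm: if `T ⊭ C ⊑ D`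
(where the normalized `T` contains `D ⊑ B*` with `B*` fresh), then in the
interpretation induced from the complete ABox generated from `{C(a*)}`, the
root element satisfies `a*^I ∉ (B*)^I`. -/
theorem stmt13 {C R Ind : Type} [Infinite Ind] (T : TBox C R)
    (Cc D : ELConcept C R) (Bstar : C) (astar : Ind) (A' : ABox C R Ind)
    (hnorm : ∀ g ∈ T, normalizedAxiom g ∨ g = (D, ELConcept.atom Bstar))
    (hmem : (D, ELConcept.atom Bstar) ∈ T)
    (hfreshC : ¬ occursName Bstar Cc) (hfreshD : ¬ occursName Bstar D)
    (hfreshT : ∀ g ∈ T, g = (D, ELConcept.atom Bstar) ∨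
      (¬ occursName Bstar g.1 ∧ ¬ occursName Bstar g.2))
    (hfin : A'.Finite)
    (hreach : Relation.ReflTransGen (Step T (ceGuard T Bstar astar))
      {Assertion.concept Cc astar} A')
    (hcomp : completeA T (ceGuard T Bstar astar) A')
    (hne : ¬ entailsT T (Cc, D)) :
    (induced A').indI astar ∉ (induced A').sem (ELConcept.atom Bstar) :=
  stmt13_general T Cc D Bstar astar A' hfreshC hfreshD hfreshT hreach hne
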